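/- Let K ∈ B(H₁ ⊕ H₂) and write K₁ = fst ∘ K : H₁ ⊕ H₂ → H₁ and K₂ = snd ∘ K : H₁ ⊕ H₂ → H₂ (so K(u, v) = (K₁(u, v), K₂(u, v))). If F₁ ⊕ F₂ : Ω → H₁ ⊕ H₂ is a continuous K-frame with bounds 0 < A ≤ B, then: (i) for all u ∈ H₁, A·‖K₁* u‖² ≤ ∫_Ω |⟪F₁ ω, u⟫|² dμ(ω) ≤ B·‖u‖², and (ii) for all v ∈ H₂, A·‖K₂* v‖² ≤ ∫_Ω |⟪F₂ ω, v⟫|² dμ(ω) ≤ B·‖v‖², where K₁* : H₁ → H₁ ⊕ H₂ and K₂* : H₂ → H₁ ⊕ H₂ are the adjoints. -/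

import Mathlib

open MeasureTheory ContinuousLinearMap

/-!
Restricting the frame inequalities of `F₁ ⊕ F₂` to vectors `(u, 0)` gives those of `F₁`: an
isometric embedding `J` with adjoint `J*` turns a `K`-frame `F` into the `J*K`-frame `J* ∘ F`,
since `⟪J* F ω, u⟫ = ⟪F ω, J u⟫`, `(J*K)* = K* J` and `‖J u‖ = ‖u‖`. For `J = inl` the adjoint is
`fst`, so `J*K = K₁` and `J* ∘ (F₁ ⊕ F₂) = F₁`; symmetrically with `inr` and `snd`.
-/

section KFrame

variable {𝕜 : Type*} [RCLike 𝕜] {Ω : Type*} [MeasurableSpace Ω]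
  {E : Type*} [NormedAddCommGroup E] [InnerProductSpace 𝕜 E] [CompleteSpace E]
  {G : Type*} [NormedAddCommGroup G] [InnerProductSpace 𝕜 G] [CompleteSpace G]

/-- The two frame inequalities of a continuous `K`-frame, without its measurability condition. -/
def HasKFrameBounds (μ : Measure Ω) (K : G →L[𝕜] E) (F : Ω → E) (A B : ℝ) : Prop :=
  ∀ x : E, A * ‖adjoint K x‖ ^ 2 ≤ ∫ ω, ‖(inner 𝕜 (F ω) x : 𝕜)‖ ^ 2 ∂μ ∧
    ∫ ω, ‖(inner 𝕜 (F ω) x : 𝕜)‖ ^ 2 ∂μ ≤ B * ‖x‖ ^ 2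

theorem HasKFrameBounds.adjoint_comp
    {H : Type*} [NormedAddCommGroup H] [InnerProductSpace 𝕜 H] [CompleteSpace H]
    {μ : Measure Ω} {K : G →L[𝕜] E} {F : Ω → E} {A B : ℝ}
    (hF : HasKFrameBounds μ K F A B) (J : H →ₗᵢ[𝕜] E) :
    HasKFrameBounds μ (adjoint J.toContinuousLinearMap ∘L K)
      (fun ω => adjoint J.toContinuousLinearMap (F ω)) A B := by
  intro u
  have h_adj : adjoint (adjoint J.toContinuousLinearMap ∘L K) u = adjoint K (J u) := by
    rw [ContinuousLinearMap.adjoint_comp, adjoint_adjoint]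
    rfl
  have h_inner : ∀ ω,
      (inner 𝕜 (adjoint J.toContinuousLinearMap (F ω)) u : 𝕜) = inner 𝕜 (F ω) (J u) :=
    fun ω => adjoint_inner_left _ _ _
  simpa only [h_adj, h_inner, J.norm_map] using hF (J u)

end KFrame

namespace WithLp

open scoped ENNReal

section Inclusions

variable (p : ℝ≥0∞) [Fact (1 ≤ p)] (𝕜 : Type*) [Semiring 𝕜] (E F : Type*)
  [SeminormedAddCommGroup E] [SeminormedAddCommGroup F] [Module 𝕜 E] [Module 𝕜 F]

def inlₗᵢ : E →ₗᵢ[𝕜] WithLp p (E × F) where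
  toFun u := toLp p (u, 0)
  map_add' u v := by simp [← toLp_add]
  map_smul' c u := by simp [← toLp_smul]
  norm_map' := norm_toLp_fst p E F

def inrₗᵢ : F →ₗᵢ[𝕜] WithLp p (E × F) where
  toFun v := toLp p (0, v)
  map_add' u v := by simp [← toLp_add]
  map_smul' c v := by simp [← toLp_smul]
  norm_map' := norm_toLp_snd p E F

end Inclusions

variable (𝕜 : Type*) [RCLike 𝕜] (E F : Type*)
  [NormedAddCommGroup E] [InnerProductSpace 𝕜 E] [CompleteSpace E]
  [NormedAddCommGroup F] [InnerProductSpace 𝕜 F] [CompleteSpace F]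

theorem adjoint_inlₗᵢ : adjoint (inlₗᵢ 2 𝕜 E F).toContinuousLinearMap = fstL 2 𝕜 E F :=
  ((eq_adjoint_iff _ _).mpr fun x u => by simp [inlₗᵢ, prod_inner_apply]).symm

theorem adjoint_inrₗᵢ : adjoint (inrₗᵢ 2 𝕜 E F).toContinuousLinearMap = sndL 2 𝕜 E F :=
  ((eq_adjoint_iff _ _).mpr fun x v => by simp [inrₗᵢ, prod_inner_apply]).symm

end WithLp

theorem prod_K_frame_component_bounds
    {𝕜 : Type*} [RCLike 𝕜]
    {H₁ : Type*} [NormedAddCommGroup H₁] [InnerProductSpace 𝕜 H₁] [CompleteSpace H₁]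
    {H₂ : Type*} [NormedAddCommGroup H₂] [InnerProductSpace 𝕜 H₂] [CompleteSpace H₂]
    {Ω : Type*} [MeasurableSpace Ω] {μ : Measure Ω}
    (K : WithLp 2 (H₁ × H₂) →L[𝕜] WithLp 2 (H₁ × H₂))
    (K₁ : WithLp 2 (H₁ × H₂) →L[𝕜] H₁) (K₂ : WithLp 2 (H₁ × H₂) →L[𝕜] H₂)
    (hK₁ : ∀ x : WithLp 2 (H₁ × H₂), K₁ x = (WithLp.equiv 2 (H₁ × H₂) (K x)).1)
    (hK₂ : ∀ x : WithLp 2 (H₁ × H₂), K₂ x = (WithLp.equiv 2 (H₁ × H₂) (K x)).2)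
    (F₁ : Ω → H₁) (F₂ : Ω → H₂) (A B : ℝ)
    (hframe : ∀ x : WithLp 2 (H₁ × H₂),
      A * ‖ContinuousLinearMap.adjoint K x‖ ^ 2 ≤
        ∫ ω, ‖(inner 𝕜 ((WithLp.equiv 2 (H₁ × H₂)).symm (F₁ ω, F₂ ω)) x : 𝕜)‖ ^ 2 ∂μ ∧
      ∫ ω, ‖(inner 𝕜 ((WithLp.equiv 2 (H₁ × H₂)).symm (F₁ ω, F₂ ω)) x : 𝕜)‖ ^ 2 ∂μ ≤
        B * ‖x‖ ^ 2) :
    (∀ u : H₁,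
      A * ‖ContinuousLinearMap.adjoint K₁ u‖ ^ 2 ≤
        ∫ ω, ‖(inner 𝕜 (F₁ ω) u : 𝕜)‖ ^ 2 ∂μ ∧
      ∫ ω, ‖(inner 𝕜 (F₁ ω) u : 𝕜)‖ ^ 2 ∂μ ≤ B * ‖u‖ ^ 2) ∧
    (∀ v : H₂,
      A * ‖ContinuousLinearMap.adjoint K₂ v‖ ^ 2 ≤
        ∫ ω, ‖(inner 𝕜 (F₂ ω) v : 𝕜)‖ ^ 2 ∂μ ∧
      ∫ ω, ‖(inner 𝕜 (F₂ ω) v : 𝕜)‖ ^ 2 ∂μ ≤ B * ‖v‖ ^ 2) := by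
  have hF : HasKFrameBounds μ K (fun ω => WithLp.toLp 2 (F₁ ω, F₂ ω)) A B := hframe
  have hK₁' : K₁ = WithLp.fstL 2 𝕜 H₁ H₂ ∘L K := ext hK₁
  have hK₂' : K₂ = WithLp.sndL 2 𝕜 H₁ H₂ ∘L K := ext hK₂
  constructor
  · have h₁ := hF.adjoint_comp (WithLp.inlₗᵢ 2 𝕜 H₁ H₂)
    rwa [WithLp.adjoint_inlₗᵢ, ← hK₁'] at h₁
  · have h₂ := hF.adjoint_comp (WithLp.inrₗᵢ 2 𝕜 H₁ H₂)
    rwa [WithLp.adjoint_inrₗᵢ, ← hK₂'] at h₂
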